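/- arXiv:2005.12451 — 2 statements merged into one kernel-verified Lean document; each statement's English description precedes it below -/
import Mathlib

section
/- (Standard (m,n)-normal form.) Under the hypotheses and conclusion of the normal form theorem (so that \widehat{\mathring{φ}}(ξ) = (1,0,…,0)^T + O(‖ξ‖^n) and \widehat{\mathring{υ}}(ξ) = (1,0,…,0) + O(‖ξ‖^m) as ξ → 0), define \widehat{\mathring{a}}(ξ) := \widehat{U}(M^T ξ)\widehat{a}(ξ)\widehat{U}(ξ)^{−1} and write it in block form with (1,1)-block \widehat{\mathring{a}_{1,1}} of size 1×1, (1,2)-block 1×(r−1), (2,1)-block (r−1)×1 and (2,2)-block (r−1)×(r−1). Then: \widehat{\mathring{a}_{1,1}}(ξ) = 1 + O(‖ξ‖^n); \widehat{\mathring{a}_{1,1}}(ξ+2πω) = O(‖ξ‖^m) for all ω ∈ Ω_M\{0}; \widehat{\mathring{a}_{1,2}}(ξ+2πω) = O(‖ξ‖^m) for all ω ∈ Ω_M; and \widehat{\mathring{a}_{2,1}}(ξ) = O(‖ξ‖^n), all as ξ → 0. Moreover \widehat{\mathring{φ}}(M^T ξ) = \widehat{\mathring{a}}(ξ)\widehat{\mathring{φ}}(ξ)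 and \mathring{a} has order m sum rules with respect to M with matching filter \mathring{υ}. -/
open scoped BigOperators Classical
open Complex Matrix

noncomputable section

abbrev Zd (d : ℕ) := Fin d → ℤ
abbrev Rd (d : ℕ) := Fin d → ℝ

/-- real dot product `k·ξ` of an integer vector with a real vector -/
def dotZR {d : ℕ} (k : Zd d) (ξ : Rd d) : ℝ := ∑ j, (k j : ℝ) * ξ j

/-- complex dot product of an integer vector with a complex vector -/
def dotZC {d : ℕ} (k : Zd d) (ξ : Fin d → ℂ) : ℂ := ∑ j, (k j : ℂ) * ξ j

/-- the symbol (Fourier series) `û(ξ) = Σ_k u(k) e^{-ik·ξ}` of a finitely supported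
matrix-valued filter -/
def symbol {d r s : ℕ} (u : Zd d →₀ Matrix (Fin r) (Fin s) ℂ) (ξ : Rd d) :
    Matrix (Fin r) (Fin s) ℂ :=
  u.sum fun k A => Complex.exp (-(Complex.I * (dotZR k ξ : ℂ))) • A

/-- the symbol evaluated at a complex frequency `ξ ∈ ℂ^d` -/
def symbolC {d r s : ℕ} (u : Zd d →₀ Matrix (Fin r) (Fin s) ℂ) (ξ : Fin d → ℂ) :
    Matrix (Fin r) (Fin s) ℂ :=
  u.sum fun k A => Complex.exp (-(Complex.I * dotZC k ξ)) • A

/-- symbol of a scalar filter -/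
def symbolS {d : ℕ} (u : Zd d →₀ ℂ) (ξ : Rd d) : ℂ :=
  u.sum fun k c => Complex.exp (-(Complex.I * (dotZR k ξ : ℂ))) * c

/-- a filter is strongly invertible if the inverse of its symbol is again a matrix of
`2πℤ^d`-periodic trigonometric polynomials -/
def StronglyInvertible {d r : ℕ} (u : Zd d →₀ Matrix (Fin r) (Fin r) ℂ) : Prop :=
  ∃ v : Zd d →₀ Matrix (Fin r) (Fin r) ℂ,
    ∀ ξ : Rd d, symbol u ξ * symbol v ξ = 1 ∧ symbol v ξ * symbol u ξ = 1

/-- convolution `[v * u](n) = Σ_k v(k) u(n-k)` of an arbitrary (row-vector valued)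
sequence with a finitely supported matrix filter -/
def convSeq {d r s : ℕ} (v : Zd d → Matrix (Fin 1) (Fin r) ℂ)
    (u : Zd d →₀ Matrix (Fin r) (Fin s) ℂ) : Zd d → Matrix (Fin 1) (Fin s) ℂ :=
  fun n => u.sum fun k A => v (n - k) * A

/-- `f(ξ) = O(‖ξ‖^m)` as `ξ → 0`: all partial derivatives of total order `< m`
vanish at the origin -/
def vanishesTo {d : ℕ} (m : ℕ) (f : Rd d → ℂ) : Prop :=
  ∀ j, j < m → iteratedFDeriv ℝ j f 0 = 0

/-- `M^T ξ` for an integer matrix `M` and a real vector `ξ` -/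
def mulVecT {d : ℕ} (M : Matrix (Fin d) (Fin d) ℤ) (ξ : Rd d) : Rd d :=
  fun i => ∑ j, (M j i : ℝ) * ξ j

/-- `M k` for an integer matrix `M` and an integer vector `k` -/
def mulVecZ {d : ℕ} (M : Matrix (Fin d) (Fin d) ℤ) (k : Zd d) : Zd d :=
  fun i => ∑ j, M i j * k j

/-- `Ω_M := (M^{-T} ℤ^d) ∩ [0,1)^d` -/
def OmegaSet {d : ℕ} (M : Matrix (Fin d) (Fin d) ℤ) : Set (Rd d) :=
  {ω | (∀ i, ∃ z : ℤ, mulVecT M ω i = (z : ℝ)) ∧ ∀ i, 0 ≤ ω i ∧ ω i < 1}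

/-- a dilation matrix: an integer matrix all of whose (complex) eigenvalues
are greater than one in modulus -/
def IsDilation {d : ℕ} (M : Matrix (Fin d) (Fin d) ℤ) : Prop :=
  ∀ μ ∈ spectrum ℂ (M.map fun z => (z : ℂ)), 1 < ‖μ‖

/-- `a` has order `m` sum rules with respect to `M` with matching filter `vgu` -/
def HasSumRules {d r : ℕ} (M : Matrix (Fin d) (Fin d) ℤ) (m : ℕ)
    (a : Zd d →₀ Matrix (Fin r) (Fin r) ℂ)
    (vgu : Zd d →₀ Matrix (Fin 1) (Fin r) ℂ) : Prop :=
  symbol vgu 0 ≠ 0 ∧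
  ∀ ω ∈ OmegaSet M, ∀ i : Fin r,
    vanishesTo m (fun ξ =>
      (symbol vgu (mulVecT M ξ) * symbol a (ξ + (2 * Real.pi) • ω)) 0 i -
      (if ω = (0 : Rd d) then 1 else 0) * (symbol vgu ξ) 0 i)

/-- the symbol of the `γ`-coset sequence `u^{[γ;M]}(k) = u(γ + Mk)` -/
def cosetSymbol {d r s : ℕ} (M : Matrix (Fin d) (Fin d) ℤ)
    (u : Zd d → Matrix (Fin r) (Fin s) ℂ) (γ : Zd d) (ξ : Rd d) :
    Matrix (Fin r) (Fin s) ℂ :=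
  ∑ᶠ p : Zd d, Complex.exp (-(Complex.I * (dotZR p ξ : ℂ))) • u (γ + mulVecZ M p)

/-- scalar version of the coset symbol -/
def cosetSymbolF {d : ℕ} (N : Matrix (Fin d) (Fin d) ℤ) (u : Zd d → ℂ) (γ : Zd d)
    (ξ : Rd d) : ℂ :=
  ∑ᶠ p : Zd d, Complex.exp (-(Complex.I * (dotZR p ξ : ℂ))) * u (γ + mulVecZ N p)

/-- subdivision operator `S_{u,M} w = |det M|^{1/2} (w↑M) * u` -/
def sdOp {d p q : ℕ} (M : Matrix (Fin d) (Fin d) ℤ) (u : Zd d →₀ Matrix (Fin p) (Fin q) ℂ)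
    (w : Zd d → Matrix (Fin 1) (Fin p) ℂ) : Zd d → Matrix (Fin 1) (Fin q) ℂ :=
  fun n => (Real.sqrt (M.det.natAbs) : ℂ) • ∑ᶠ k : Zd d, w k * u (n - mulVecZ M k)

/-- transition operator `T_{u,M} v = |det M|^{1/2} (v * u^*)(M·)` -/
def tzOp {d p q : ℕ} (M : Matrix (Fin d) (Fin d) ℤ) (u : Zd d →₀ Matrix (Fin p) (Fin q) ℂ)
    (v : Zd d → Matrix (Fin 1) (Fin q) ℂ) : Zd d → Matrix (Fin 1) (Fin p) ℂ :=
  fun n => (Real.sqrt (M.det.natAbs) : ℂ) • ∑ᶠ k : Zd d, v k * (u (k - mulVecZ M n))ᴴ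

/-- a polynomial sequence of (total) degree at most `m` -/
def IsPolySeq {d : ℕ} (m : ℕ) (p : Zd d → ℂ) : Prop :=
  ∃ P : MvPolynomial (Fin d) ℂ, P.totalDegree ≤ m ∧
    ∀ k : Zd d, p k = MvPolynomial.eval (fun j => (k j : ℂ)) P

/-- a polynomial sequence of (total) degree less than `m` -/
def IsPolySeqLt {d : ℕ} (m : ℕ) (p : Zd d → ℂ) : Prop :=
  ∃ P : MvPolynomial (Fin d) ℂ, P.totalDegree < m ∧
    ∀ k : Zd d, p k = MvPolynomial.eval (fun j => (k j : ℂ)) P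

/-- convolution `p * y` of a (scalar) polynomial sequence with a finitely supported
row-vector filter -/
def polyConv {d r : ℕ} (p : Zd d → ℂ) (y : Zd d →₀ Matrix (Fin 1) (Fin r) ℂ) :
    Zd d → Matrix (Fin 1) (Fin r) ℂ :=
  fun n => y.sum fun j A => p (n - j) • A

/-- the standard vector conversion operator `E_N` associated with `N` and the coset
representatives `s` -/
def ENop {d r : ℕ} (N : Matrix (Fin d) (Fin d) ℤ) (s : Fin r → Zd d)
    (v : Zd d → ℂ) : Zd d → Matrix (Fin 1) (Fin r) ℂ :=
  fun k => Matrix.of fun _ j => v (mulVecZ N k + s j)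

/-- the row vector `Υ_N(ξ) = (e^{i N^{-1} s_1 · ξ}, …, e^{i N^{-1} s_r · ξ})` -/
def UpsN {d r : ℕ} (N : Matrix (Fin d) (Fin d) ℤ) (s : Fin r → Zd d) (ξ : Rd d) :
    Matrix (Fin 1) (Fin r) ℂ :=
  Matrix.of fun _ j => Complex.exp (Complex.I *
    ((∑ t, ((N.map fun z => (z : ℝ))⁻¹.mulVec fun i => (s j i : ℝ)) t * ξ t : ℝ) : ℂ))

/-- the sequence `∇^β δ`, whose symbol is `Π_j (1 - e^{-iξ_j})^{β_j}` -/
def nablaDelta {d : ℕ} (β : Fin d → ℕ) : Zd d → ℂ :=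
  fun k => ∏ j, if 0 ≤ k j then ((-1 : ℂ) ^ (k j).toNat * ((β j).choose (k j).toNat : ℂ)) else 0

/-- the matrix `F_{r;M}(ξ) = (e^{-i γ_l · (ξ + 2π ω_k)} I_r)_{l,k}` -/
def FMat {d r n : ℕ} (γ : Fin n → Zd d) (ω : Fin n → Rd d) (ξ : Rd d) :
    Matrix (Fin n × Fin r) (Fin n × Fin r) ℂ :=
  Matrix.of fun li kj =>
    if li.2 = kj.2 then
      Complex.exp (-(Complex.I * (dotZR (γ li.1) (ξ + (2 * Real.pi) • ω kj.1) : ℂ)))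
    else 0

/-- the matrix `D_{u,ω;M}(ξ)` whose `(l,k)`-th `r×r` block is `û(ξ+2πω)` when
`ω_l + ω - ω_k ∈ ℤ^d` and `0` otherwise -/
def DMat {d r n : ℕ} (u : Zd d →₀ Matrix (Fin r) (Fin r) ℂ) (ω : Fin n → Rd d)
    (ωv : Rd d) (ξ : Rd d) : Matrix (Fin n × Fin r) (Fin n × Fin r) ℂ :=
  Matrix.of fun li kj =>
    if ∀ i, ∃ z : ℤ, (ω li.1 + ωv - ω kj.1) i = (z : ℝ) then
      symbol u (ξ + (2 * Real.pi) • ωv) li.2 kj.2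
    else 0

/-- the matrix `E_{u,ω;M}(ξ)` whose `(l,k)`-th block is `û^{[γ_k-γ_l;M]}(ξ) e^{-iγ_k·(2πω)}` -/
def EMat {d r n : ℕ} (M : Matrix (Fin d) (Fin d) ℤ)
    (u : Zd d →₀ Matrix (Fin r) (Fin r) ℂ) (γ : Fin n → Zd d)
    (ωv : Rd d) (ξ : Rd d) : Matrix (Fin n × Fin r) (Fin n × Fin r) ℂ :=
  Matrix.of fun li kj =>
    (Complex.exp (-(Complex.I * (dotZR (γ kj.1) ((2 * Real.pi) • ωv) : ℂ))) •
      cosetSymbol M (fun k => u k) (γ kj.1 - γ li.1) ξ) li.2 kj.2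

/-- the matrix `P_{u;M}(ξ) = [û(ξ+2πω_1), …, û(ξ+2πω_{d_M})]` -/
def PMat {d r sc n : ℕ} (u : Zd d →₀ Matrix (Fin sc) (Fin r) ℂ) (ω : Fin n → Rd d)
    (ξ : Rd d) : Matrix (Fin sc) (Fin n × Fin r) ℂ :=
  Matrix.of fun i kj => symbol u (ξ + (2 * Real.pi) • ω kj.1) i kj.2

/-- the matrix `Q_{u;M}(ξ) = [û^{[γ_1;M]}(ξ), …, û^{[γ_{d_M};M]}(ξ)]` -/
def QMat {d r sc n : ℕ} (M : Matrix (Fin d) (Fin d) ℤ)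
    (u : Zd d →₀ Matrix (Fin sc) (Fin r) ℂ) (γ : Fin n → Zd d)
    (ξ : Rd d) : Matrix (Fin sc) (Fin n × Fin r) ℂ :=
  Matrix.of fun i kj => cosetSymbol M (fun k => u k) (γ kj.1) ξ i kj.2

/-- `j`-fold application of the transition operator with low-pass filter `a`:
the low-pass framelet coefficients `v_j` -/
def tzIter {d r : ℕ} (M : Matrix (Fin d) (Fin d) ℤ)
    (a : Zd d →₀ Matrix (Fin r) (Fin r) ℂ)
    (v0 : Zd d → Matrix (Fin 1) (Fin r) ℂ) : ℕ → Zd d → Matrix (Fin 1) (Fin r) ℂ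
  | 0 => v0
  | j + 1 => tzOp M a (tzIter M a v0 j)

/-- reconstruction: `reconIter … J i = ṽ_{J-i}` for the `J`-level discrete framelet
transform with filter bank `({a;b},{atil;btil})_Θ` applied to input `v0` -/
def reconIter {d r sc : ℕ} (M : Matrix (Fin d) (Fin d) ℤ)
    (a : Zd d →₀ Matrix (Fin r) (Fin r) ℂ) (b : Zd d →₀ Matrix (Fin sc) (Fin r) ℂ)
    (atil : Zd d →₀ Matrix (Fin r) (Fin r) ℂ) (btil : Zd d →₀ Matrix (Fin sc) (Fin r) ℂ)
    (Θ : Zd d →₀ Matrix (Fin r) (Fin r) ℂ)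
    (v0 : Zd d → Matrix (Fin 1) (Fin r) ℂ) (J : ℕ) : ℕ → Zd d → Matrix (Fin 1) (Fin r) ℂ
  | 0 => convSeq (tzIter M a v0 J) Θ
  | i + 1 => fun n =>
      sdOp M atil (reconIter M a b atil btil Θ v0 J i) n +
      sdOp M btil (tzOp M b (tzIter M a v0 (J - i - 1))) n

/-- the `J`-level discrete framelet transform has the perfect reconstruction property:
every input `v0` is exactly and uniquely recovered via the deconvolution `x * Θ = ṽ_0` -/
def PerfectReconstruction {d r sc : ℕ} (M : Matrix (Fin d) (Fin d) ℤ)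
    (a : Zd d →₀ Matrix (Fin r) (Fin r) ℂ) (b : Zd d →₀ Matrix (Fin sc) (Fin r) ℂ)
    (atil : Zd d →₀ Matrix (Fin r) (Fin r) ℂ) (btil : Zd d →₀ Matrix (Fin sc) (Fin r) ℂ)
    (Θ : Zd d →₀ Matrix (Fin r) (Fin r) ℂ) (J : ℕ) : Prop :=
  ∀ v0 : Zd d → Matrix (Fin 1) (Fin r) ℂ,
    convSeq v0 Θ = reconIter M a b atil btil Θ v0 J J ∧
    ∀ x, convSeq x Θ = reconIter M a b atil btil Θ v0 J J → x = v0
/-- the new filter `mra(ξ) := Û(M^Tξ) â(ξ) Û(ξ)^{-1}` -/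
def mraF {d r : ℕ} (M : Matrix (Fin d) (Fin d) ℤ)
    (U Uinv a : Zd d →₀ Matrix (Fin r) (Fin r) ℂ) (ξ : Rd d) :
    Matrix (Fin r) (Fin r) ℂ :=
  symbol U (mulVecT M ξ) * symbol a ξ * symbol Uinv ξ

/-!
Write `Å = mraF M U Uinv a`, `ψ = Ûφ̂` and `ν = υ̂Û⁻¹`. Cancelling `Û⁻¹Û` gives
`ψ(Mᵀξ) = Å(ξ)ψ(ξ)`, hence `Å(ξ)e₁ - e₁ = (ψ(Mᵀξ) - e₁) - Å(ξ)(ψ(ξ) - e₁) = O(‖ξ‖ⁿ)`: this is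
the first column of `Å`. Since `Û(Mᵀ·)` is `2πM⁻ᵀℤᵈ`-periodic,
`ν(Mᵀξ)Å(ξ + 2πω) = υ̂(Mᵀξ)â(ξ + 2πω)Û⁻¹(ξ + 2πω)`, so the sum rules of `a` with matching filter
`υ` become sum rules of `Å` with matching filter `ν`; together with `ν = e₁ᵀ + O(‖ξ‖ᵐ)` they give
the first row of `Å(· + 2πω)`. Throughout, vanishing to a given order at `0` is preserved by
sums, by products with smooth factors (Leibniz) and by linear changes of variables.
-/

section VanishesTo

open scoped ContDiff

variable {d : ℕ} {m : ℕ} {f g : Rd d → ℂ}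

lemma vanishesTo.add (hf : ContDiff ℝ ∞ f) (hg : ContDiff ℝ ∞ g) (hf0 : vanishesTo m f)
    (hg0 : vanishesTo m g) : vanishesTo m fun ξ => f ξ + g ξ := fun j hj => by
  rw [fun_iteratedFDeriv_add_apply (hf.of_le (by exact_mod_cast le_top)).contDiffAt
    (hg.of_le (by exact_mod_cast le_top)).contDiffAt, hf0 j hj, hg0 j hj, add_zero]

lemma vanishesTo.sub (hf : ContDiff ℝ ∞ f) (hg : ContDiff ℝ ∞ g) (hf0 : vanishesTo m f)
    (hg0 : vanishesTo m g) : vanishesTo m fun ξ => f ξ - g ξ := fun j hj => by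
  rw [fun_iteratedFDeriv_sub_apply (hf.of_le (by exact_mod_cast le_top)).contDiffAt
    (hg.of_le (by exact_mod_cast le_top)).contDiffAt, hf0 j hj, hg0 j hj, sub_zero]

lemma vanishesTo.sum {ι : Type*} {s : Finset ι} {F : ι → Rd d → ℂ}
    (hF : ∀ k ∈ s, ContDiff ℝ ∞ (F k)) (hF0 : ∀ k ∈ s, vanishesTo m (F k)) :
    vanishesTo m fun ξ => ∑ k ∈ s, F k ξ := fun j hj => by
  rw [iteratedFDeriv_fun_sum_apply fun k hk =>
    ((hF k hk).of_le (by exact_mod_cast le_top)).contDiffAt]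
  exact Finset.sum_eq_zero fun k hk => hF0 k hk j hj

lemma vanishesTo.mul_left (hf : ContDiff ℝ ∞ f) (hg : ContDiff ℝ ∞ g) (hg0 : vanishesTo m g) :
    vanishesTo m fun ξ => f ξ * g ξ := fun j hj => by
  rw [← norm_le_zero_iff]
  refine (norm_iteratedFDeriv_mul_le hf hg 0 (by exact_mod_cast le_top)).trans_eq
    (Finset.sum_eq_zero fun i _ => ?_)
  rw [hg0 (j - i) (by omega), norm_zero, mul_zero]

lemma vanishesTo.mul_right (hf : ContDiff ℝ ∞ f) (hg : ContDiff ℝ ∞ g) (hf0 : vanishesTo m f) :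
    vanishesTo m fun ξ => f ξ * g ξ := by
  simpa only [mul_comm] using hf0.mul_left hg hf

lemma vanishesTo.comp_continuousLinearMap (hf : ContDiff ℝ ∞ f) (hf0 : vanishesTo m f)
    (L : Rd d →L[ℝ] Rd d) : vanishesTo m (f ∘ L) := fun j hj => by
  rw [L.iteratedFDeriv_comp_right hf 0 (by exact_mod_cast le_top), map_zero, hf0 j hj]
  rfl

end VanishesTo

section Symbol

variable {d : ℕ}

lemma contDiff_symbol_apply {n : WithTop ℕ∞} {r s : ℕ} (u : Zd d →₀ Matrix (Fin r) (Fin s) ℂ)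
    (i : Fin r) (j : Fin s) : ContDiff ℝ n fun ξ => symbol u ξ i j := by
  have : ContDiff ℝ n fun x : ℝ => (x : ℂ) := ofRealCLM.contDiff
  simp only [symbol, Finsupp.sum, Matrix.sum_apply, Matrix.smul_apply, smul_eq_mul, dotZR]
  fun_prop

lemma symbol_add_two_pi_smul {r s : ℕ} (u : Zd d →₀ Matrix (Fin r) (Fin s) ℂ) (ξ v : Rd d)
    (hv : ∀ i, ∃ z : ℤ, v i = z) : symbol u (ξ + (2 * Real.pi) • v) = symbol u ξ := by
  choose z hz using hv
  refine Finsupp.sum_congr fun k _ => congrArg (· • u k) ?_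
  have hdot : dotZR k (ξ + (2 * Real.pi) • v) =
      dotZR k ξ + (∑ j, k j * z j : ℤ) * (2 * Real.pi) := by
    simp only [dotZR, Pi.add_apply, Pi.smul_apply, smul_eq_mul, hz, mul_add,
      Finset.sum_add_distrib, Int.cast_sum, Int.cast_mul, Finset.sum_mul]
    congr 1
    exact Finset.sum_congr rfl fun j _ => by ring
  rw [hdot, Complex.ofReal_add, mul_add, neg_add, Complex.exp_add]
  push_cast
  rw [show -(I * ((∑ j, (k j : ℂ) * z j) * (2 * Real.pi))) =
      (-(∑ j, k j * z j) : ℤ) * (2 * Real.pi * I) by push_cast; ring,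
    Complex.exp_int_mul_two_pi_mul_I, mul_one]

end Symbol

section MulVecT

variable {d : ℕ} (M : Matrix (Fin d) (Fin d) ℤ)

def mulVecTCLM : Rd d →L[ℝ] Rd d :=
  LinearMap.toContinuousLinearMap (Matrix.mulVecLin (M.map (Int.cast : ℤ → ℝ))ᵀ)

lemma coe_mulVecTCLM : ⇑(mulVecTCLM M) = mulVecT M := by
  ext ξ i
  simp only [mulVecTCLM, LinearMap.coe_toContinuousLinearMap', Matrix.mulVecLin_apply,
    Matrix.mulVec, dotProduct, Matrix.transpose_apply, Matrix.map_apply, mulVecT]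

lemma symbol_mulVecT_add_two_pi_smul {r s : ℕ} (u : Zd d →₀ Matrix (Fin r) (Fin s) ℂ)
    {ω : Rd d} (hω : ω ∈ OmegaSet M) (ξ : Rd d) :
    symbol u (mulVecT M (ξ + (2 * Real.pi) • ω)) = symbol u (mulVecT M ξ) := by
  rw [← coe_mulVecTCLM, map_add, map_smul, coe_mulVecTCLM]
  exact symbol_add_two_pi_smul u _ _ hω.1

end MulVecT

section Entrywise

open scoped ContDiff

variable {d : ℕ} {ι κ μ : Type*}

def SmoothEntries (F : Rd d → Matrix ι κ ℂ) : Prop :=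
  ∀ i j, ContDiff ℝ ∞ fun ξ => F ξ i j

def EntriesVanishTo (m : ℕ) (F : Rd d → Matrix ι κ ℂ) : Prop :=
  ∀ i j, vanishesTo m fun ξ => F ξ i j

variable {F G : Rd d → Matrix ι κ ℂ}

lemma smoothEntries_symbol {r s : ℕ} (u : Zd d →₀ Matrix (Fin r) (Fin s) ℂ) :
    SmoothEntries (symbol u) :=
  contDiff_symbol_apply u

lemma smoothEntries_const (A : Matrix ι κ ℂ) : SmoothEntries fun _ : Rd d => A :=
  fun _ _ => contDiff_const

lemma SmoothEntries.sub (hF : SmoothEntries F) (hG : SmoothEntries G) :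
    SmoothEntries fun ξ => F ξ - G ξ :=
  fun i j => (hF i j).sub (hG i j)

lemma SmoothEntries.const_smul (c : ℂ) (hF : SmoothEntries F) :
    SmoothEntries fun ξ => c • F ξ :=
  fun i j => contDiff_const.mul (hF i j)

lemma SmoothEntries.mul [Fintype κ] {A : Rd d → Matrix ι κ ℂ} {B : Rd d → Matrix κ μ ℂ}
    (hA : SmoothEntries A) (hB : SmoothEntries B) : SmoothEntries fun ξ => A ξ * B ξ :=
  fun i j => by
    simp only [Matrix.mul_apply]
    exact ContDiff.sum fun k _ => (hA i k).mul (hB k j)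

lemma SmoothEntries.comp_add_const (hF : SmoothEntries F) (c : Rd d) :
    SmoothEntries fun ξ => F (ξ + c) :=
  fun i j => (hF i j).comp (contDiff_id.add contDiff_const)

lemma SmoothEntries.comp_mulVecT (hF : SmoothEntries F) (M : Matrix (Fin d) (Fin d) ℤ) :
    SmoothEntries fun ξ => F (mulVecT M ξ) :=
  fun i j => by
    rw [← coe_mulVecTCLM]
    exact (hF i j).comp (mulVecTCLM M).contDiff

lemma EntriesVanishTo.add {m : ℕ} (hF : SmoothEntries F) (hG : SmoothEntries G)
    (hF0 : EntriesVanishTo m F) (hG0 : EntriesVanishTo m G) :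
    EntriesVanishTo m fun ξ => F ξ + G ξ :=
  fun i j => (hF0 i j).add (hF i j) (hG i j) (hG0 i j)

lemma EntriesVanishTo.sub {m : ℕ} (hF : SmoothEntries F) (hG : SmoothEntries G)
    (hF0 : EntriesVanishTo m F) (hG0 : EntriesVanishTo m G) :
    EntriesVanishTo m fun ξ => F ξ - G ξ :=
  fun i j => (hF0 i j).sub (hF i j) (hG i j) (hG0 i j)

lemma EntriesVanishTo.const_smul {m : ℕ} (c : ℂ) (hF : SmoothEntries F)
    (hF0 : EntriesVanishTo m F) : EntriesVanishTo m fun ξ => c • F ξ :=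
  fun i j => (hF0 i j).mul_left contDiff_const (hF i j)

lemma EntriesVanishTo.mul_left {m : ℕ} [Fintype κ] {A : Rd d → Matrix ι κ ℂ}
    {B : Rd d → Matrix κ μ ℂ} (hA : SmoothEntries A) (hB : SmoothEntries B)
    (hB0 : EntriesVanishTo m B) : EntriesVanishTo m fun ξ => A ξ * B ξ :=
  fun i j => by
    simp only [Matrix.mul_apply]
    exact vanishesTo.sum (fun k _ => (hA i k).mul (hB k j))
      fun k _ => (hB0 k j).mul_left (hA i k) (hB k j)

lemma EntriesVanishTo.mul_right {m : ℕ} [Fintype κ] {A : Rd d → Matrix ι κ ℂ}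
    {B : Rd d → Matrix κ μ ℂ} (hA : SmoothEntries A) (hB : SmoothEntries B)
    (hA0 : EntriesVanishTo m A) : EntriesVanishTo m fun ξ => A ξ * B ξ :=
  fun i j => by
    simp only [Matrix.mul_apply]
    exact vanishesTo.sum (fun k _ => (hA i k).mul (hB k j))
      fun k _ => (hA0 i k).mul_right (hA i k) (hB k j)

lemma EntriesVanishTo.comp_mulVecT {m : ℕ} (hF : SmoothEntries F) (hF0 : EntriesVanishTo m F)
    (M : Matrix (Fin d) (Fin d) ℤ) : EntriesVanishTo m fun ξ => F (mulVecT M ξ) :=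
  fun i j => by
    rw [← coe_mulVecTCLM]
    exact (hF0 i j).comp_continuousLinearMap (hF i j) (mulVecTCLM M)

end Entrywise

section NormalForm

variable {d r : ℕ}

/-- `e₁`, with the statement's convention `(i : ℕ) = 0`, which makes sense for every `r`. -/
def unitCol (r : ℕ) : Matrix (Fin r) (Fin 1) ℂ :=
  Matrix.of fun i _ => if (i : ℕ) = 0 then 1 else 0

@[simp]
lemma unitCol_apply (i : Fin r) (j : Fin 1) : unitCol r i j = if (i : ℕ) = 0 then 1 else 0 :=
  rfl

lemma mul_unitCol_apply {ι : Type*} (A : Matrix ι (Fin r) ℂ) (i : ι) {j : Fin r}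
    (hj : (j : ℕ) = 0) : (A * unitCol r) i 0 = A i j := by
  simp [Matrix.mul_apply, unitCol, ← hj, Fin.val_inj]

lemma unitCol_transpose_mul_apply {κ : Type*} (A : Matrix (Fin r) κ ℂ) {i : Fin r}
    (hi : (i : ℕ) = 0) (j : κ) : ((unitCol r)ᵀ * A) 0 j = A i j := by
  simp [Matrix.mul_apply, unitCol, ← hi, Fin.val_inj]

/-- `HasSumRules`, phrased for symbols rather than filters. -/
def SymbolSumRules (M : Matrix (Fin d) (Fin d) ℤ) (m : ℕ) (A : Rd d → Matrix (Fin r) (Fin r) ℂ)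
    (V : Rd d → Matrix (Fin 1) (Fin r) ℂ) : Prop :=
  ∀ ω ∈ OmegaSet M, EntriesVanishTo m fun ξ =>
    V (mulVecT M ξ) * A (ξ + (2 * Real.pi) • ω) - (if ω = 0 then 1 else 0 : ℂ) • V ξ

lemma HasSumRules.symbolSumRules {M : Matrix (Fin d) (Fin d) ℤ} {m : ℕ}
    {a : Zd d →₀ Matrix (Fin r) (Fin r) ℂ} {vgu : Zd d →₀ Matrix (Fin 1) (Fin r) ℂ}
    (h : HasSumRules M m a vgu) : SymbolSumRules M m (symbol a) (symbol vgu) :=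
  fun ω hω i j => by
    rw [Subsingleton.elim i 0]
    exact h.2 ω hω j

variable (M : Matrix (Fin d) (Fin d) ℤ) (U Uinv a : Zd d →₀ Matrix (Fin r) (Fin r) ℂ)

lemma smoothEntries_mraF : SmoothEntries (mraF M U Uinv a) :=
  (((smoothEntries_symbol U).comp_mulVecT M).mul (smoothEntries_symbol a)).mul
    (smoothEntries_symbol Uinv)

lemma mraF_refinable (hUinv : ∀ ξ, symbol Uinv ξ * symbol U ξ = 1)
    {φhat : Rd d → Matrix (Fin r) (Fin 1) ℂ} (href : ∀ ξ, φhat (mulVecT M ξ) = symbol a ξ * φhat ξ)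
    (ξ : Rd d) :
    symbol U (mulVecT M ξ) * φhat (mulVecT M ξ) = mraF M U Uinv a ξ * (symbol U ξ * φhat ξ) := by
  simp only [mraF, href, Matrix.mul_assoc, ← Matrix.mul_assoc (symbol Uinv ξ), hUinv,
    Matrix.one_mul]

/-- `Û(M^T ·)` is `2π M^{-T}ℤ^d`-periodic, so only `â` and `Û^{-1}` see the shift by `2πω`. -/
lemma mraF_add_two_pi_smul {ω : Rd d} (hω : ω ∈ OmegaSet M) (ξ : Rd d) :
    mraF M U Uinv a (ξ + (2 * Real.pi) • ω) =
      symbol U (mulVecT M ξ) * symbol a (ξ + (2 * Real.pi) • ω) *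
        symbol Uinv (ξ + (2 * Real.pi) • ω) := by
  rw [mraF, symbol_mulVecT_add_two_pi_smul M U hω]

lemma symbolSumRules_mraF {m : ℕ} {vgu : Zd d →₀ Matrix (Fin 1) (Fin r) ℂ}
    (hUinv : ∀ ξ, symbol Uinv ξ * symbol U ξ = 1)
    (h : SymbolSumRules M m (symbol a) (symbol vgu)) :
    SymbolSumRules M m (mraF M U Uinv a) fun ξ => symbol vgu ξ * symbol Uinv ξ := by
  intro ω hω
  have key : ∀ ξ, (symbol vgu (mulVecT M ξ) * symbol Uinv (mulVecT M ξ)) *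
        mraF M U Uinv a (ξ + (2 * Real.pi) • ω) -
          (if ω = 0 then 1 else 0 : ℂ) • (symbol vgu ξ * symbol Uinv ξ) =
      (symbol vgu (mulVecT M ξ) * symbol a (ξ + (2 * Real.pi) • ω) -
          (if ω = 0 then 1 else 0 : ℂ) • symbol vgu ξ) * symbol Uinv (ξ + (2 * Real.pi) • ω) := by
    intro ξ
    rw [mraF_add_two_pi_smul M U Uinv a hω, Matrix.sub_mul, Matrix.smul_mul]
    congr 1
    · simp only [Matrix.mul_assoc, ← Matrix.mul_assoc (symbol Uinv _), hUinv, Matrix.one_mul]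
    · split_ifs with hω0 <;> simp [hω0]
  simp only [key]
  exact (h ω hω).mul_right
    ((((smoothEntries_symbol vgu).comp_mulVecT M).mul
      ((smoothEntries_symbol a).comp_add_const _)).sub
      ((smoothEntries_symbol vgu).const_smul _))
    ((smoothEntries_symbol Uinv).comp_add_const _)

lemma entriesVanishTo_mul_unitCol_sub {n : ℕ} {A : Rd d → Matrix (Fin r) (Fin r) ℂ}
    {Ψ : Rd d → Matrix (Fin r) (Fin 1) ℂ} (hA : SmoothEntries A) (hΨ : SmoothEntries Ψ)
    (hrefin : ∀ ξ, Ψ (mulVecT M ξ) = A ξ * Ψ ξ)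
    (hΨ0 : EntriesVanishTo n fun ξ => Ψ ξ - unitCol r) :
    EntriesVanishTo n fun ξ => A ξ * unitCol r - unitCol r := by
  have key : ∀ ξ, A ξ * unitCol r - unitCol r =
      (Ψ (mulVecT M ξ) - unitCol r) - A ξ * (Ψ ξ - unitCol r) := by
    intro ξ
    rw [hrefin, Matrix.mul_sub]
    abel
  have hΨe : SmoothEntries fun ξ => Ψ ξ - unitCol r := hΨ.sub (smoothEntries_const _)
  simp only [key]
  exact (hΨ0.comp_mulVecT hΨe M).sub (hΨe.comp_mulVecT M) (hA.mul hΨe) (hΨ0.mul_left hA hΨe)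

lemma entriesVanishTo_unitCol_transpose_mul_sub {m : ℕ} {A : Rd d → Matrix (Fin r) (Fin r) ℂ}
    {V : Rd d → Matrix (Fin 1) (Fin r) ℂ} (hA : SmoothEntries A) (hV : SmoothEntries V)
    (hsr : SymbolSumRules M m A V) (hV0 : EntriesVanishTo m fun ξ => V ξ - (unitCol r)ᵀ) :
    ∀ ω ∈ OmegaSet M, EntriesVanishTo m fun ξ => (unitCol r)ᵀ * A (ξ + (2 * Real.pi) • ω) -
      (if ω = 0 then 1 else 0 : ℂ) • (unitCol r)ᵀ := by
  intro ω hω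
  set δ : ℂ := if ω = 0 then 1 else 0
  have key : ∀ ξ, (unitCol r)ᵀ * A (ξ + (2 * Real.pi) • ω) - δ • (unitCol r)ᵀ =
      (V (mulVecT M ξ) * A (ξ + (2 * Real.pi) • ω) - δ • V ξ) -
        (V (mulVecT M ξ) - (unitCol r)ᵀ) * A (ξ + (2 * Real.pi) • ω) +
        δ • (V ξ - (unitCol r)ᵀ) := by
    intro ξ
    rw [Matrix.sub_mul, smul_sub]
    abel
  have hVe : SmoothEntries fun ξ => V ξ - (unitCol r)ᵀ := hV.sub (smoothEntries_const _)
  have hA' : SmoothEntries fun ξ => A (ξ + (2 * Real.pi) • ω) := hA.comp_add_const _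
  have hVA : SmoothEntries fun ξ => V (mulVecT M ξ) * A (ξ + (2 * Real.pi) • ω) - δ • V ξ :=
    ((hV.comp_mulVecT M).mul hA').sub (hV.const_smul δ)
  have hVeA : SmoothEntries fun ξ => (V (mulVecT M ξ) - (unitCol r)ᵀ) * A (ξ + (2 * Real.pi) • ω) :=
    (hVe.comp_mulVecT M).mul hA'
  simp only [key]
  exact ((hsr ω hω).sub hVA hVeA ((hV0.comp_mulVecT hVe M).mul_right (hVe.comp_mulVecT M) hA')).add
    (hVA.sub hVeA) (hVe.const_smul δ) (hV0.const_smul δ hVe)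

end NormalForm

theorem stmt8_general {d r : ℕ}
    (M : Matrix (Fin d) (Fin d) ℤ)
    (m : ℕ) (a : Zd d →₀ Matrix (Fin r) (Fin r) ℂ)
    (φhat : Rd d → Matrix (Fin r) (Fin 1) ℂ)
    (hφ : ∀ i, ContDiff ℝ ⊤ fun ξ => φhat ξ i 0)
    (href : ∀ ξ, φhat (mulVecT M ξ) = symbol a ξ * φhat ξ)
    (vgu : Zd d →₀ Matrix (Fin 1) (Fin r) ℂ)
    (hsr : HasSumRules M m a vgu)
    (n : ℕ)
    (U Uinv : Zd d →₀ Matrix (Fin r) (Fin r) ℂ)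
    (hUinv : ∀ ξ : Rd d, symbol U ξ * symbol Uinv ξ = 1 ∧ symbol Uinv ξ * symbol U ξ = 1)
    (hUφ : ∀ i : Fin r, vanishesTo n (fun ξ =>
      (symbol U ξ * φhat ξ) i 0 - (if (i : ℕ) = 0 then 1 else 0)))
    (hUv : ∀ i : Fin r, vanishesTo m (fun ξ =>
      (symbol vgu ξ * symbol Uinv ξ) 0 i - (if (i : ℕ) = 0 then 1 else 0))) :
    -- (1,1)-block: mra_{1,1}(ξ) = 1 + O(‖ξ‖^n)
    (∀ i j : Fin r, (i : ℕ) = 0 → (j : ℕ) = 0 →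
      vanishesTo n (fun ξ => mraF M U Uinv a ξ i j - 1)) ∧
    -- (1,1)-block: mra_{1,1}(ξ + 2πω) = O(‖ξ‖^m) for ω ∈ Ω_M \ {0}
    (∀ ω ∈ OmegaSet M, ω ≠ 0 → ∀ i j : Fin r, (i : ℕ) = 0 → (j : ℕ) = 0 →
      vanishesTo m (fun ξ => mraF M U Uinv a (ξ + (2 * Real.pi) • ω) i j)) ∧
    -- (1,2)-block: mra_{1,2}(ξ + 2πω) = O(‖ξ‖^m) for all ω ∈ Ω_M
    (∀ ω ∈ OmegaSet M, ∀ i j : Fin r, (i : ℕ) = 0 → (j : ℕ) ≠ 0 →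
      vanishesTo m (fun ξ => mraF M U Uinv a (ξ + (2 * Real.pi) • ω) i j)) ∧
    -- (2,1)-block: mra_{2,1}(ξ) = O(‖ξ‖^n)
    (∀ i j : Fin r, (i : ℕ) ≠ 0 → (j : ℕ) = 0 →
      vanishesTo n (fun ξ => mraF M U Uinv a ξ i j)) ∧
    -- refinability of mrφ = U φ with respect to mra
    (∀ ξ, symbol U (mulVecT M ξ) * φhat (mulVecT M ξ) =
      mraF M U Uinv a ξ * (symbol U ξ * φhat ξ)) ∧
    -- mra has order m sum rules with matching filter mrυ = vgu U^{-1}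
    (∀ ω ∈ OmegaSet M, ∀ i : Fin r,
      vanishesTo m (fun ξ =>
        ((symbol vgu (mulVecT M ξ) * symbol Uinv (mulVecT M ξ)) *
            mraF M U Uinv a (ξ + (2 * Real.pi) • ω)) 0 i -
          (if ω = (0 : Rd d) then 1 else 0) * (symbol vgu ξ * symbol Uinv ξ) 0 i)) := by
  have hUinvU : ∀ ξ, symbol Uinv ξ * symbol U ξ = 1 := fun ξ => (hUinv ξ).2
  have hA := smoothEntries_mraF M U Uinv a
  have hφ' : SmoothEntries φhat := fun i j => by
    rw [Subsingleton.elim j 0]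
    exact (hφ i).of_le le_top
  have hrefin := mraF_refinable M U Uinv a hUinvU href
  have hsr' := symbolSumRules_mraF M U Uinv a hUinvU hsr.symbolSumRules
  have hcol := entriesVanishTo_mul_unitCol_sub M hA ((smoothEntries_symbol U).mul hφ') hrefin
    fun i j => by rw [Subsingleton.elim j 0]; exact hUφ i
  have hrow := entriesVanishTo_unitCol_transpose_mul_sub M hA
    ((smoothEntries_symbol vgu).mul (smoothEntries_symbol Uinv)) hsr' fun i j => by
      rw [Subsingleton.elim i 0]; exact hUv j
  refine ⟨fun i j hi hj => ?_, fun ω hω hω0 i j hi hj => ?_, fun ω hω i j hi hj => ?_,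
    fun i j hi hj => ?_, hrefin, fun ω hω i => hsr' ω hω 0 i⟩
  · simpa [mul_unitCol_apply _ _ hj, hi] using hcol i 0
  · simpa [unitCol_transpose_mul_apply _ hi, hj, hω0] using hrow ω hω 0 j
  · simpa only [Matrix.sub_apply, Matrix.smul_apply, Matrix.transpose_apply, unitCol_apply,
      unitCol_transpose_mul_apply _ hi, hj, if_false, smul_zero, sub_zero] using hrow ω hω 0 j
  · simpa [mul_unitCol_apply _ _ hj, hi] using hcol i 0

/-- standard `(m,n)`-normal form: under the normal form conclusion, the
filter `mra = U(M^T·) a U^{-1}` takes the standard `(m,n)`-normal form, `mrφ = Uφ` is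
`mra`-refinable, and `mra` has order `m` sum rules with matching filter `mrυ = υU^{-1}`. -/
theorem stmt8 {d r : ℕ} (hr : 2 ≤ r)
    (M : Matrix (Fin d) (Fin d) ℤ) (hM : IsDilation M)
    (m : ℕ) (a : Zd d →₀ Matrix (Fin r) (Fin r) ℂ)
    (φhat : Rd d → Matrix (Fin r) (Fin 1) ℂ)
    (hφ : ∀ i, ContDiff ℝ ⊤ fun ξ => φhat ξ i 0)
    (href : ∀ ξ, φhat (mulVecT M ξ) = symbol a ξ * φhat ξ)
    (hφ0 : φhat 0 ≠ 0)
    (vgu : Zd d →₀ Matrix (Fin 1) (Fin r) ℂ)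
    (hsr : HasSumRules M m a vgu)
    (hnorm : (symbol vgu 0 * φhat 0) 0 0 = 1)
    (n : ℕ) (hn : 0 < n)
    (U Uinv : Zd d →₀ Matrix (Fin r) (Fin r) ℂ)
    (hUinv : ∀ ξ : Rd d, symbol U ξ * symbol Uinv ξ = 1 ∧ symbol Uinv ξ * symbol U ξ = 1)
    (hUφ : ∀ i : Fin r, vanishesTo n (fun ξ =>
      (symbol U ξ * φhat ξ) i 0 - (if (i : ℕ) = 0 then 1 else 0)))
    (hUv : ∀ i : Fin r, vanishesTo m (fun ξ =>
      (symbol vgu ξ * symbol Uinv ξ) 0 i - (if (i : ℕ) = 0 then 1 else 0))) :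
    -- (1,1)-block: mra_{1,1}(ξ) = 1 + O(‖ξ‖^n)
    (∀ i j : Fin r, (i : ℕ) = 0 → (j : ℕ) = 0 →
      vanishesTo n (fun ξ => mraF M U Uinv a ξ i j - 1)) ∧
    -- (1,1)-block: mra_{1,1}(ξ + 2πω) = O(‖ξ‖^m) for ω ∈ Ω_M \ {0}
    (∀ ω ∈ OmegaSet M, ω ≠ 0 → ∀ i j : Fin r, (i : ℕ) = 0 → (j : ℕ) = 0 →
      vanishesTo m (fun ξ => mraF M U Uinv a (ξ + (2 * Real.pi) • ω) i j)) ∧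
    -- (1,2)-block: mra_{1,2}(ξ + 2πω) = O(‖ξ‖^m) for all ω ∈ Ω_M
    (∀ ω ∈ OmegaSet M, ∀ i j : Fin r, (i : ℕ) = 0 → (j : ℕ) ≠ 0 →
      vanishesTo m (fun ξ => mraF M U Uinv a (ξ + (2 * Real.pi) • ω) i j)) ∧
    -- (2,1)-block: mra_{2,1}(ξ) = O(‖ξ‖^n)
    (∀ i j : Fin r, (i : ℕ) ≠ 0 → (j : ℕ) = 0 →
      vanishesTo n (fun ξ => mraF M U Uinv a ξ i j)) ∧
    -- refinability of mrφ = U φ with respect to mra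
    (∀ ξ, symbol U (mulVecT M ξ) * φhat (mulVecT M ξ) =
      mraF M U Uinv a ξ * (symbol U ξ * φhat ξ)) ∧
    -- mra has order m sum rules with matching filter mrυ = vgu U^{-1}
    (∀ ω ∈ OmegaSet M, ∀ i : Fin r,
      vanishesTo m (fun ξ =>
        ((symbol vgu (mulVecT M ξ) * symbol Uinv (mulVecT M ξ)) *
            mraF M U Uinv a (ξ + (2 * Real.pi) • ω)) 0 i -
          (if ω = (0 : Rd d) then 1 else 0) * (symbol vgu ξ * symbol Uinv ξ) 0 i)) :=
  stmt8_general M m a φhat hφ href vgu hsr n U Uinv hUinv hUφ hUv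
end
end

section
/- (Characterization of balanced vanishing moments.) Let N be a d×d integer matrix with |det N| = r ≥ 2, Γ_N = {s₁,…,s_r} a complete set of representatives of ℤ^d/[Nℤ^d] with s₁ = 0, and define the vector conversion operator E_N : l(ℤ^d) → (l(ℤ^d))^{1×r} by [E_N v](k) := (v(Nk+s₁),…,v(Nk+s_r)) and \widehat{Υ_N}(ξ) := (e^{iN^{−1}s₁·ξ},…,e^{iN^{−1}s_r·ξ}). Then a filter b ∈ (l₀(ℤ^d))^{s×r} satisfies T_{b,M} E_N(p) = 0 for all polynomial sequences p of degree < m (i.e., b has order m E_N-balanced vanishing moments) if and only if \widehat{Υ_N}(ξ) \overline{\widehat{b}(ξ)}^T = O(‖ξ‖^m) as ξ → 0. -/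
open scoped BigOperators Classical
open Complex Matrix

noncomputable section

/-!
Both sides are moment conditions on one finite weighted point set. Expanding the transition
operator, the `(n, i)` entry of `T_{b,M} E_N p` is
`|det M|^{1/2} Σ_{k,j} conj(b(k)_{ij}) p(Nk + s_j + NMn)`, so the left side says that the weights
`conj(b(k)_{ij})` at the lattice points `Nk + s_j` annihilate every polynomial of degree `< m`
(translating the points by `NMn` does not affect this). On the Fourier side, `Υ_N(ξ) \overline{b̂(ξ)}^T` is the
exponential sum `Σ_{k,j} conj(b(k)_{ij}) e^{i N^{-1}(Nk + s_j)·ξ}`, whose derivatives of order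
`< m` at the origin are the moments of the same weights at the points `N^{-1}(Nk + s_j)`.
Annihilating the polynomials of degree `< m` is invariant under invertible affine changes of
the points.
-/

section MvPolynomialDegree

open MvPolynomial

variable {σ τ R : Type*} [CommSemiring R]

theorem MvPolynomial.totalDegree_X_le (s : σ) : (X s : MvPolynomial σ R).totalDegree ≤ 1 :=
  (totalDegree_monomial_le _ _).trans_eq (by simp)

theorem MvPolynomial.totalDegree_sum_C_mul_X_le [Fintype σ] (a : σ → R) :
    (∑ u, C (a u) * X u : MvPolynomial σ R).totalDegree ≤ 1 :=
  (totalDegree_finsetSum _ _).trans <| Finset.sup_le fun u _ =>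
    (totalDegree_mul _ _).trans (by simpa using totalDegree_X_le u)

theorem MvPolynomial.totalDegree_bind₁_le (g : σ → MvPolynomial τ R)
    (hg : ∀ i, (g i).totalDegree ≤ 1) (P : MvPolynomial σ R) :
    (bind₁ g P).totalDegree ≤ P.totalDegree := by
  conv_lhs => rw [P.as_sum, map_sum]
  refine (totalDegree_finsetSum _ _).trans (Finset.sup_le fun β hβ => ?_)
  rw [bind₁_monomial]
  refine ((totalDegree_mul _ _).trans_eq (by rw [totalDegree_C, zero_add])).trans ?_
  refine ((totalDegree_finsetProd _ _).trans (Finset.sum_le_sum fun i _ => ?_)).trans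
    (le_totalDegree hβ)
  exact (totalDegree_pow _ _).trans (by simpa using Nat.mul_le_mul_left (β i) (hg i))

theorem MvPolynomial.eval_bind₁ (x : τ → R) (g : σ → MvPolynomial τ R)
    (P : MvPolynomial σ R) : eval x (bind₁ g P) = eval (fun i => eval x (g i)) P :=
  eval₂Hom_bind₁ _ _ _ _

theorem Finsupp.prod_pow_eq_prod_toList (β : σ →₀ ℕ) (x : σ → R) :
    (β.prod fun l e => x l ^ e) =
      ∏ i : Fin β.toMultiset.toList.length, x β.toMultiset.toList[(i : ℕ)] := by
  rw [Fin.prod_univ_fun_getElem, ← Multiset.prod_coe, ← Multiset.map_coe, Multiset.coe_toList,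
    Finsupp.toMultiset_map, Finsupp.prod_toMultiset,
    Finsupp.prod_mapDomain_index (fun _ => pow_zero _) (fun _ _ _ => pow_add _ _ _)]

end MvPolynomialDegree

section Moments

open MvPolynomial

variable {σ R ι : Type*} [CommRing R]

def MomentsVanish (T : Finset ι) (c : ι → R) (x : ι → σ → R) (m : ℕ) : Prop :=
  ∀ Q : MvPolynomial σ R, Q.totalDegree < m → ∑ t ∈ T, c t * eval (x t) Q = 0

variable {T : Finset ι} {c : ι → R} {x : ι → σ → R} {m : ℕ}

theorem momentsVanish_iff_prod :
    MomentsVanish T c x m ↔ ∀ j < m, ∀ g : Fin j → σ, ∑ t ∈ T, c t * ∏ i, x t (g i) = 0 := by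
  constructor
  · intro h j hj g
    have hdeg : (∏ i, X (g i) : MvPolynomial σ R).totalDegree < m := by
      refine lt_of_le_of_lt ((totalDegree_finsetProd _ _).trans ?_) hj
      simpa using Finset.sum_le_sum fun i (_ : i ∈ Finset.univ) => totalDegree_X_le (R := R) (g i)
    simpa [eval_prod] using h _ hdeg
  · intro h Q hQ
    have hmonomial : ∀ β ∈ Q.support,
        ∑ t ∈ T, c t * eval (x t) (monomial β (Q.coeff β)) = 0 := by
      intro β hβ
      have hdeg : β.toMultiset.toList.length < m := by
        rw [Multiset.length_toList, Finsupp.card_toMultiset]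
        exact (le_totalDegree hβ).trans_lt hQ
      simp_rw [eval_monomial, Finsupp.prod_pow_eq_prod_toList, mul_left_comm (c _),
        ← Finset.mul_sum, h _ hdeg, mul_zero]
    conv_lhs => enter [2, t]; rw [Q.as_sum, map_sum, Finset.mul_sum]
    rw [Finset.sum_comm]
    exact Finset.sum_eq_zero hmonomial

theorem MomentsVanish.of_affine [Fintype σ] {y : ι → σ → R} (h : MomentsVanish T c x m)
    (A : Matrix σ σ R) (v : σ → R)
    (hy : ∀ t ∈ T, y t = A *ᵥ x t + v) : MomentsVanish T c y m := by
  intro P hP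
  let g : σ → MvPolynomial σ R := fun l => ∑ u, C (A l u) * X u + C (v l)
  have hg : ∀ l, (g l).totalDegree ≤ 1 := fun l =>
    (totalDegree_add _ _).trans <| max_le (totalDegree_sum_C_mul_X_le _) (by simp)
  have heval : ∀ t ∈ T, eval (x t) (bind₁ g P) = eval (y t) P := by
    intro t ht
    have hlin : (fun l => eval (x t) (g l)) = A *ᵥ x t + v := by
      ext l
      simp [g, Matrix.mulVec, dotProduct]
    rw [eval_bind₁, hlin, hy t ht]
  rw [← h _ ((totalDegree_bind₁_le g hg P).trans_lt hP)]
  exact Finset.sum_congr rfl fun t ht => by rw [heval t ht]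

variable [Fintype σ] [DecidableEq σ]

theorem momentsVanish_add_const_iff (v : σ → R) :
    MomentsVanish T c (fun t => x t + v) m ↔ MomentsVanish T c x m :=
  ⟨fun h => h.of_affine 1 (-v) fun t _ => by simp,
    fun h => h.of_affine 1 v fun t _ => by simp⟩

theorem momentsVanish_mulVec_iff {A : Matrix σ σ R} (hA : IsUnit A.det) :
    MomentsVanish T c (fun t => A *ᵥ x t) m ↔ MomentsVanish T c x m :=
  ⟨fun h => h.of_affine A⁻¹ 0 fun t _ => by simp [Matrix.nonsing_inv_mul _ hA],
    fun h => h.of_affine A 0 fun t _ => by simp⟩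

end Moments

section ExpSums

open MvPolynomial

theorem hasDerivAt_cexp_I_mul (x : ℝ) :
    HasDerivAt (fun t : ℝ => exp (I * t)) (I * exp (I * x)) x := by
  simpa [mul_comm] using
    (((hasDerivAt_id (x : ℂ)).const_mul I).cexp).comp_ofReal

theorem iteratedDeriv_cexp_I_mul (n : ℕ) :
    iteratedDeriv n (fun t : ℝ => exp (I * t)) = fun t : ℝ => I ^ n * exp (I * t) := by
  induction n with
  | zero => simp
  | succ n ih =>
    funext x
    rw [iteratedDeriv_succ, ih, ((hasDerivAt_cexp_I_mul x).const_mul (I ^ n)).deriv, pow_succ,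
      mul_assoc]

theorem contDiff_cexp_I_mul {n : WithTop ℕ∞} : ContDiff ℝ n fun t : ℝ => exp (I * t) :=
  (contDiff_const.mul ofRealCLM.contDiff).cexp

theorem iteratedFDeriv_cexp_I_mul_clm_at_zero {E : Type*} [NormedAddCommGroup E] [NormedSpace ℝ E]
    (L : E →L[ℝ] ℝ) (j : ℕ) (v : Fin j → E) :
    iteratedFDeriv ℝ j (fun x => exp (I * L x)) 0 v = I ^ j * ∏ i, (L (v i) : ℂ) := by
  rw [show (fun x => exp (I * L x)) = (fun t : ℝ => exp (I * t)) ∘ L from rfl,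
    L.iteratedFDeriv_comp_right contDiff_cexp_I_mul 0 le_rfl,
    ContinuousMultilinearMap.compContinuousLinearMap_apply,
    iteratedFDeriv_apply_eq_iteratedDeriv_mul_prod, iteratedDeriv_cexp_I_mul]
  simp [mul_comm]

variable {d : ℕ} {ι : Type*}

theorem iteratedFDeriv_sum_cexp_dotProduct_at_zero (T : Finset ι) (c : ι → ℂ) (w : ι → Rd d)
    (j : ℕ) (v : Fin j → Rd d) :
    iteratedFDeriv ℝ j (fun ξ => ∑ t ∈ T, c t * exp (I * (w t ⬝ᵥ ξ : ℝ))) 0 v =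
      I ^ j * ∑ t ∈ T, c t * ∏ i, ((w t ⬝ᵥ v i : ℝ) : ℂ) := by
  let L : ι → Rd d →L[ℝ] ℝ := fun t => LinearMap.toContinuousLinearMap (dotProductBilin ℝ ℝ (w t))
  have hL : ∀ t ξ, L t ξ = w t ⬝ᵥ ξ := fun t ξ => rfl
  have hsmooth : ∀ t, ContDiff ℝ j fun ξ => exp (I * L t ξ) := fun t =>
    contDiff_cexp_I_mul.comp (L t).contDiff
  simp_rw [← hL, ← smul_eq_mul (c _)]
  rw [iteratedFDeriv_fun_sum_apply fun t _ => ((hsmooth t).const_smul (c t)).contDiffAt]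
  simp_rw [iteratedFDeriv_const_smul_apply' (hsmooth _).contDiffAt]
  simp [iteratedFDeriv_cexp_I_mul_clm_at_zero, Finset.mul_sum, mul_left_comm]

theorem vanishesTo_sum_cexp_dotProduct_iff (T : Finset ι) (c : ι → ℂ) (w : ι → Rd d) (m : ℕ) :
    vanishesTo m (fun ξ => ∑ t ∈ T, c t * exp (I * (w t ⬝ᵥ ξ : ℝ))) ↔
      MomentsVanish T c (fun t l => (w t l : ℂ)) m := by
  constructor
  · refine fun h => momentsVanish_iff_prod.mpr fun j hj g => ?_
    have hj := congrArg (fun F => F fun i => Pi.single (g i) 1) (h j hj)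
    simpa [iteratedFDeriv_sum_cexp_dotProduct_at_zero] using hj
  · intro h j hj
    ext v
    let Q : MvPolynomial (Fin d) ℂ := ∏ i, ∑ l, C (v i l : ℂ) * X l
    have hQ : Q.totalDegree < m :=
      ((totalDegree_finsetProd _ _).trans (Finset.sum_le_sum fun i _ =>
        totalDegree_sum_C_mul_X_le _)).trans_lt (by simpa using hj)
    have hQeval : ∀ t, eval (fun l => (w t l : ℂ)) Q = ∏ i, ((w t ⬝ᵥ v i : ℝ) : ℂ) := by
      intro t
      simp [Q, dotProduct, mul_comm]
    simp [iteratedFDeriv_sum_cexp_dotProduct_at_zero, ← hQeval, h Q hQ]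

end ExpSums

section TransitionOperator

variable {d r sc : ℕ}

theorem IsDilation.det_ne_zero {M : Matrix (Fin d) (Fin d) ℤ} (hM : IsDilation M) :
    M.det ≠ 0 := by
  intro h
  have hsing : (0 : ℂ) ∈ spectrum ℂ (M.map fun z : ℤ => (z : ℂ)) := by
    rw [spectrum.zero_mem_iff, Matrix.isUnit_iff_isUnit_det, ← Int.cast_det, h, Int.cast_zero]
    exact not_isUnit_zero
  exact absurd (hM 0 hsing) (by norm_num)

theorem tzOp_apply_eq_sum {p q : ℕ} (M : Matrix (Fin d) (Fin d) ℤ)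
    (b : Zd d →₀ Matrix (Fin p) (Fin q) ℂ) (v : Zd d → Matrix (Fin 1) (Fin q) ℂ) (n : Zd d) :
    tzOp M b v n =
      (Real.sqrt M.det.natAbs : ℂ) • ∑ k ∈ b.support, v (k + mulVecZ M n) * (b k)ᴴ := by
  rw [tzOp, ← finsum_comp_equiv (Equiv.addRight (mulVecZ M n))
    (f := fun k => v k * (b (k - mulVecZ M n))ᴴ)]
  congr 1
  simp only [Equiv.coe_addRight, add_sub_cancel_right]
  refine finsum_eq_sum_of_support_subset _ fun k hk => ?_
  by_contra hb
  simp_all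

theorem mulVecZ_add (N : Matrix (Fin d) (Fin d) ℤ) (k l : Zd d) :
    mulVecZ N (k + l) = mulVecZ N k + mulVecZ N l :=
  Matrix.mulVec_add N k l

theorem tzOp_ENop_apply (M N : Matrix (Fin d) (Fin d) ℤ) (s : Fin r → Zd d)
    (b : Zd d →₀ Matrix (Fin sc) (Fin r) ℂ) (p : Zd d → ℂ) (n : Zd d) (i : Fin sc) :
    tzOp M b (ENop N s p) n 0 i = (Real.sqrt M.det.natAbs : ℂ) *
      ∑ t ∈ b.support ×ˢ Finset.univ,
        starRingEnd ℂ (b t.1 i t.2) * p (mulVecZ N t.1 + s t.2 + mulVecZ N (mulVecZ M n)) := by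
  simp only [tzOp_apply_eq_sum, Matrix.smul_apply, Matrix.sum_apply, Matrix.mul_apply, ENop,
    Matrix.of_apply, Matrix.conjTranspose_apply, mulVecZ_add, Finset.sum_product, smul_eq_mul]
  congr 1
  refine Finset.sum_congr rfl fun k _ => Finset.sum_congr rfl fun j _ => ?_
  rw [mul_comm, add_right_comm]
  rfl

theorem forall_isPolySeqLt_imp_iff {m : ℕ} {F : (Zd d → ℂ) → Prop} :
    (∀ p, IsPolySeqLt m p → F p) ↔
      ∀ P : MvPolynomial (Fin d) ℂ, P.totalDegree < m →
        F fun k => MvPolynomial.eval (fun j => (k j : ℂ)) P := by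
  refine ⟨fun h P hP => h _ ⟨P, hP, fun k => rfl⟩, ?_⟩
  rintro h p ⟨P, hP, hp⟩
  rw [show p = _ from funext hp]
  exact h P hP

theorem forall_tzOp_ENop_eq_zero_iff {M : Matrix (Fin d) (Fin d) ℤ} (hM : M.det ≠ 0)
    (N : Matrix (Fin d) (Fin d) ℤ) (s : Fin r → Zd d) (b : Zd d →₀ Matrix (Fin sc) (Fin r) ℂ)
    (m : ℕ) :
    (∀ p, IsPolySeqLt m p → tzOp M b (ENop N s p) = 0) ↔
      ∀ i, MomentsVanish (b.support ×ˢ Finset.univ) (fun t => starRingEnd ℂ (b t.1 i t.2))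
        (fun t l => ((mulVecZ N t.1 + s t.2) l : ℂ)) m := by
  have hsqrt : (Real.sqrt M.det.natAbs : ℂ) ≠ 0 := by
    simpa [Int.natAbs_pos] using hM
  have hcast : ∀ k l : Zd d,
      (fun j => ((k + l) j : ℂ)) = (fun j => (k j : ℂ)) + fun j => (l j : ℂ) :=
    fun k l => funext fun j => by simp
  have hentries : ∀ p, tzOp M b (ENop N s p) = 0 ↔ ∀ n i, tzOp M b (ENop N s p) n 0 i = 0 :=
    fun p => ⟨fun h n i => by rw [h]; rfl,
      fun h => funext fun n => Matrix.ext fun a i => by rw [Subsingleton.elim a 0, h]; rfl⟩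
  calc (∀ p, IsPolySeqLt m p → tzOp M b (ENop N s p) = 0)
      ↔ ∀ n i, MomentsVanish (b.support ×ˢ Finset.univ) (fun t => starRingEnd ℂ (b t.1 i t.2))
          (fun t => (fun l => ((mulVecZ N t.1 + s t.2) l : ℂ)) +
            fun l => (mulVecZ N (mulVecZ M n) l : ℂ)) m := by
        simp only [forall_isPolySeqLt_imp_iff, hentries, tzOp_ENop_apply, mul_eq_zero, hsqrt,
          false_or, hcast, MomentsVanish]
        exact ⟨fun h n i P hP => h P hP n i, fun h P hP n i => h n i P hP⟩
    _ ↔ _ := by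
        simp only [momentsVanish_add_const_iff]
        exact ⟨fun h => h 0, fun h _ => h⟩

end TransitionOperator

section Symbol

variable {d r sc : ℕ}

theorem star_cexp_neg_I_mul_ofReal (x : ℝ) : star (exp (-(I * x))) = exp (I * x) := by
  rw [← starRingEnd_apply, ← exp_conj]
  simp

theorem inv_mulVec_cast_mulVecZ_add {N : Matrix (Fin d) (Fin d) ℤ}
    (hN : IsUnit (N.map fun z : ℤ => (z : ℝ)).det) (k v : Zd d) :
    (N.map fun z : ℤ => (z : ℝ))⁻¹ *ᵥ (fun l => ((mulVecZ N k + v) l : ℝ)) =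
      (fun l => (k l : ℝ)) + (N.map fun z : ℤ => (z : ℝ))⁻¹ *ᵥ fun l => (v l : ℝ) := by
  have hcast : (fun l => ((mulVecZ N k + v) l : ℝ)) =
      (N.map fun z : ℤ => (z : ℝ)) *ᵥ (fun l => (k l : ℝ)) + fun l => (v l : ℝ) := by
    ext l
    rw [Pi.add_apply, Pi.add_apply, Int.cast_add]
    exact congrArg (· + _) (RingHom.map_mulVec (Int.castRingHom ℝ) N k l)
  rw [hcast, Matrix.mulVec_add, Matrix.mulVec_mulVec, Matrix.nonsing_inv_mul _ hN,
    Matrix.one_mulVec]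

theorem UpsN_mul_symbol_conjTranspose_apply {N : Matrix (Fin d) (Fin d) ℤ}
    (hN : IsUnit (N.map fun z : ℤ => (z : ℝ)).det) (s : Fin r → Zd d)
    (b : Zd d →₀ Matrix (Fin sc) (Fin r) ℂ) (ξ : Rd d) (i : Fin sc) :
    (UpsN N s ξ * (symbol b ξ)ᴴ) 0 i = ∑ t ∈ b.support ×ˢ Finset.univ,
      starRingEnd ℂ (b t.1 i t.2) * exp (I * (((N.map fun z : ℤ => (z : ℝ))⁻¹ *ᵥ
        fun l => ((mulVecZ N t.1 + s t.2) l : ℝ)) ⬝ᵥ ξ : ℝ)) := by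
  simp only [Matrix.mul_apply, Matrix.conjTranspose_apply, symbol, Finsupp.sum,
    Matrix.sum_apply, Matrix.smul_apply, smul_eq_mul, star_sum, Finset.sum_product,
    inv_mulVec_cast_mulVecZ_add hN, add_dotProduct]
  rw [Finset.sum_comm]
  refine Finset.sum_congr rfl fun j _ => ?_
  rw [Finset.mul_sum]
  refine Finset.sum_congr rfl fun k _ => ?_
  rw [show dotZR k ξ = (fun l => (k l : ℝ)) ⬝ᵥ ξ from rfl, star_mul', star_cexp_neg_I_mul_ofReal,
    UpsN, Matrix.of_apply, ofReal_add, mul_add, exp_add]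
  simp only [dotProduct, ← starRingEnd_apply]
  ring

theorem vanishesTo_UpsN_mul_symbol_iff {N : Matrix (Fin d) (Fin d) ℤ}
    (hN : IsUnit (N.map fun z : ℤ => (z : ℝ)).det) (s : Fin r → Zd d)
    (b : Zd d →₀ Matrix (Fin sc) (Fin r) ℂ) (m : ℕ) (i : Fin sc) :
    vanishesTo m (fun ξ => (UpsN N s ξ * (symbol b ξ)ᴴ) 0 i) ↔
      MomentsVanish (b.support ×ˢ Finset.univ) (fun t => starRingEnd ℂ (b t.1 i t.2))
        (fun t l => ((mulVecZ N t.1 + s t.2) l : ℂ)) m := by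
  have hA : IsUnit ((N.map fun z : ℤ => (z : ℝ))⁻¹.map ofRealHom).det := by
    rw [← RingHom.mapMatrix_apply, ← RingHom.map_det]
    exact (Matrix.isUnit_nonsing_inv_det _ hN).map _
  have hpoints : ∀ (B : Matrix (Fin d) (Fin d) ℝ) (z : Zd d),
      (fun l => (((B *ᵥ fun l => (z l : ℝ)) l : ℝ) : ℂ)) = B.map ofRealHom *ᵥ fun l => (z l : ℂ) :=
    fun B z => funext fun l => by
      simpa [Function.comp_def] using RingHom.map_mulVec ofRealHom B (fun l => (z l : ℝ)) l
  rw [funext (UpsN_mul_symbol_conjTranspose_apply hN s b · i),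
    vanishesTo_sum_cexp_dotProduct_iff]
  convert momentsVanish_mulVec_iff hA using 3 with t
  exact hpoints _ _

end Symbol

theorem stmt14_general {d r sc : ℕ} (M : Matrix (Fin d) (Fin d) ℤ) (hM : IsDilation M)
    (N : Matrix (Fin d) (Fin d) ℤ) (hr : 2 ≤ r) (hdet : N.det.natAbs = r)
    (s : Fin r → Zd d)
    (m : ℕ) (b : Zd d →₀ Matrix (Fin sc) (Fin r) ℂ) :
    (∀ p : Zd d → ℂ, IsPolySeqLt m p → tzOp M b (ENop N s p) = 0) ↔
      (∀ i : Fin sc,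
        vanishesTo m (fun ξ => (UpsN N s ξ * (symbol b ξ)ᴴ) 0 i)) := by
  have hN : IsUnit (N.map fun z : ℤ => (z : ℝ)).det := by
    rw [← Int.cast_det, isUnit_iff_ne_zero, Int.cast_ne_zero]
    rintro h
    rw [h, Int.natAbs_zero] at hdet
    omega
  rw [forall_tzOp_ENop_eq_zero_iff hM.det_ne_zero]
  exact forall_congr' fun i => (vanishesTo_UpsN_mul_symbol_iff hN s b m i).symm

/-- `b` has order `m` `E_N`-balanced vanishing moments, i.e.
`T_{b,M} E_N(p) = 0` for all polynomial sequences of degree `< m`, iff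
`Υ_N(ξ) \overline{b̂(ξ)}^T = O(‖ξ‖^m)` as `ξ → 0`. -/
theorem stmt14 {d r sc : ℕ} (M : Matrix (Fin d) (Fin d) ℤ) (hM : IsDilation M)
    (N : Matrix (Fin d) (Fin d) ℤ) (hr : 2 ≤ r) (hdet : N.det.natAbs = r)
    (s : Fin r → Zd d) (hs0 : ∀ j : Fin r, (j : ℕ) = 0 → s j = 0)
    (hs : ∀ k : Zd d, ∃! jp : Fin r × Zd d, k = s jp.1 + mulVecZ N jp.2)
    (m : ℕ) (b : Zd d →₀ Matrix (Fin sc) (Fin r) ℂ) :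
    (∀ p : Zd d → ℂ, IsPolySeqLt m p → tzOp M b (ENop N s p) = 0) ↔
      (∀ i : Fin sc,
        vanishesTo m (fun ξ => (UpsN N s ξ * (symbol b ξ)ᴴ) 0 i)) :=
  stmt14_general M hM N hr hdet s m b

end
end
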